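/- Let 0 < R < π and H > 0, and define f(θ₀) = 2π [ 1 − cos θ₀ + (R−θ₀)²(cos θ₀ − cos R)/((R−θ₀)² + H²) ] for θ₀ ∈ [0,R]. Then f is differentiable at 0 with f'(0) = −4π H² R (1 − cos R)/(R² + H²)², which is strictly negative; hence an infinitesimally small truncation at the pole strictly decreases the resistance of the full radial cone. -/
import Mathlib

open Real Filter Set

/-- Scale-invariant resistance of the radial frustum cone with base angular radius `R`,
truncation angle `θ₀` and height `H`, as a function of `θ₀`. -/
noncomputable def frustumRes1 (R H θ₀ : ℝ) : ℝ :=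
  2 * π * (1 - Real.cos θ₀ +
    (R - θ₀) ^ 2 * (Real.cos θ₀ - Real.cos R) / ((R - θ₀) ^ 2 + H ^ 2))

/-- `f(θ₀) = frustumRes1 R H θ₀` is differentiable at `θ₀ = 0` with
`f'(0) = −4πH²R(1 − cos R)/(R² + H²)² < 0`: an infinitesimally small truncation at the
pole strictly decreases the resistance of the full radial cone. -/
theorem stmt_7 (R H : ℝ) (hR0 : 0 < R) (hRpi : R < π) (hH : 0 < H) :
    HasDerivAt (frustumRes1 R H)
      (-(4 * π * H ^ 2 * R * (1 - Real.cos R) / (R ^ 2 + H ^ 2) ^ 2)) 0 ∧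
    -(4 * π * H ^ 2 * R * (1 - Real.cos R) / (R ^ 2 + H ^ 2) ^ 2) < 0 := by
  have hD : (R - 0) ^ 2 + H ^ 2 ≠ 0 := by positivity
  have h1 : HasDerivAt (fun θ : ℝ => R - θ) (-1) 0 := (hasDerivAt_id 0).const_sub R
  have h2 : HasDerivAt (fun θ : ℝ => (R - θ) ^ 2) (2 * (R - 0) ^ 1 * (-1)) 0 := h1.pow 2
  have hc : HasDerivAt Real.cos (-Real.sin 0) 0 := Real.hasDerivAt_cos 0
  have hN : HasDerivAt (fun θ : ℝ => (R - θ) ^ 2 * (Real.cos θ - Real.cos R))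
      (2 * (R - 0) ^ 1 * (-1) * (Real.cos 0 - Real.cos R) +
        (R - 0) ^ 2 * (-Real.sin 0)) 0 := h2.mul (hc.sub_const _)
  have hDen : HasDerivAt (fun θ : ℝ => (R - θ) ^ 2 + H ^ 2)
      (2 * (R - 0) ^ 1 * (-1)) 0 := h2.add_const _
  have hq := hN.div hDen hD
  have hf := ((hc.const_sub 1).add hq).const_mul (2 * π)
  have hderiv : HasDerivAt (frustumRes1 R H)
      (2 * π * (-(-Real.sin 0) +
        ((2 * (R - 0) ^ 1 * (-1) * (Real.cos 0 - Real.cos R) + (R - 0) ^ 2 * (-Real.sin 0)) *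
            ((R - 0) ^ 2 + H ^ 2) -
          (R - 0) ^ 2 * (Real.cos 0 - Real.cos R) * (2 * (R - 0) ^ 1 * (-1))) /
          ((R - 0) ^ 2 + H ^ 2) ^ 2)) 0 := hf
  have heq : (2 * π * (-(-Real.sin 0) +
        ((2 * (R - 0) ^ 1 * (-1) * (Real.cos 0 - Real.cos R) + (R - 0) ^ 2 * (-Real.sin 0)) *
            ((R - 0) ^ 2 + H ^ 2) -
          (R - 0) ^ 2 * (Real.cos 0 - Real.cos R) * (2 * (R - 0) ^ 1 * (-1))) /
          ((R - 0) ^ 2 + H ^ 2) ^ 2))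
      = -(4 * π * H ^ 2 * R * (1 - Real.cos R) / (R ^ 2 + H ^ 2) ^ 2) := by
    have h0 : (R : ℝ) - 0 = R := by ring
    rw [Real.sin_zero, Real.cos_zero, h0]
    have hne : (R ^ 2 + H ^ 2) ≠ 0 := by positivity
    field_simp
    ring
  have hcos : Real.cos R < 1 := by
    have := Real.cos_lt_cos_of_nonneg_of_le_pi le_rfl hRpi.le hR0
    simpa using this
  constructor
  · exact heq ▸ hderiv
  · have : 0 < 4 * π * H ^ 2 * R * (1 - Real.cos R) / (R ^ 2 + H ^ 2) ^ 2 := by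
      have hπ := Real.pi_pos
      have h1 : (0:ℝ) < 1 - Real.cos R := by linarith
      positivity
    linarith
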